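/- arXiv:1811.09171 — 6 statements merged into one kernel-verified Lean document; each statement's English description precedes it below -/
import Mathlib

section
/- (Convergence of the generalized range-move algorithm) Let V be a finite vertex set, Ẽ ⊆ V×V a finite edge set, E_i : ℤ → ℝ unary terms, T a positive integer, and g, h : ℤ → ℝ with h(x) ≥ g(x) for all x ∈ ℤ and h(x) = g(x) for |x| ≤ T. Let x^t : V → ℤ and let A ⊆ V satisfy |x^t_i − x^t_j| ≤ T for all i, j ∈ A. Define the choice function φ^t by φ^t_i(u) = u_i if i ∈ A and φ^t_i(u) = x^t_i otherwise. If u* minimizes u ↦ E^{ght}(φ^t(u)) over all u : V → ℤ and x^{t+1} = φ^t(u*), then E^g(x^{t+1}) ≤ E^g(x^t). -/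
/-- Convergence of the generalized range-move algorithm: one iteration does not increase
the true energy `E^g`. -/
theorem generalized_range_move_monotone {V : Type*} [Fintype V] [DecidableEq V]
    (Edges : Finset (V × V)) (Eu : V → ℤ → ℝ) (T : ℤ) (hT : 0 < T)
    (g h : ℤ → ℝ) (hge : ∀ x : ℤ, g x ≤ h x) (heq : ∀ x : ℤ, |x| ≤ T → h x = g x)
    (xt : V → ℤ) (A : Finset V)
    (hA : ∀ i ∈ A, ∀ j ∈ A, |xt i - xt j| ≤ T)
    (Eg Eght : (V → ℤ) → ℝ)
    (hEg : ∀ x : V → ℤ,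
      Eg x = (∑ i, Eu i (x i)) + ∑ e ∈ Edges, g (x e.1 - x e.2))
    (hEght : ∀ x : V → ℤ,
      Eght x = (∑ i, Eu i (x i)) + ∑ e ∈ Edges,
        (if e.1 ∈ A ∧ e.2 ∈ A then h (x e.1 - x e.2) else g (x e.1 - x e.2)))
    (φ : (V → ℤ) → (V → ℤ))
    (hφ : ∀ (u : V → ℤ) (i : V), φ u i = if i ∈ A then u i else xt i)
    (ustar : V → ℤ) (hmin : ∀ u : V → ℤ, Eght (φ ustar) ≤ Eght (φ u))
    (xt1 : V → ℤ) (hxt1 : xt1 = φ ustar) :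
    Eg xt1 ≤ Eg xt := by
  have hphixt : φ xt = xt := by
    funext i; rw [hφ]; split <;> rfl
  have h1 : Eg xt1 ≤ Eght xt1 := by
    rw [hEg, hEght]
    gcongr with e he
    split
    · exact hge _
    · exact le_refl _
  have h2 : Eght xt = Eg xt := by
    rw [hEg, hEght]
    congr 1
    apply Finset.sum_congr rfl
    intro e he
    split
    · next hmem => exact heq _ (hA _ hmem.1 _ hmem.2)
    · rfl
  calc Eg xt1 ≤ Eght xt1 := h1
    _ = Eght (φ ustar) := by rw [hxt1]
    _ ≤ Eght (φ xt) := hmin xt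
    _ = Eght xt := by rw [hphixt]
    _ = Eg xt := h2
end

section
/- (Strict improvement) Under the hypotheses of the convergence theorem for the generalized range-move algorithm (h ≥ g everywhere, h = g on [-T,T], the active set A satisfies |x^t_i − x^t_j| ≤ T for all i, j ∈ A, u* minimizes u ↦ E^{ght}(φ^t(u)) and x^{t+1} = φ^t(u*)), if additionally the minimization is strict, i.e. E^{ght}(φ^t(u*)) < E^{ght}(x^t), then E^g(x^{t+1}) < E^g(x^t). -/
/-- Strict improvement: if moreover the minimization of the hybrid energy is strict,
i.e. `E^{ght}(φ^t(u*)) < E^{ght}(x^t)`, then the true energy `E^g` strictly decreases. -/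
theorem generalized_range_move_strict {V : Type*} [Fintype V] [DecidableEq V]
    (Edges : Finset (V × V)) (Eu : V → ℤ → ℝ) (T : ℤ) (hT : 0 < T)
    (g h : ℤ → ℝ) (hge : ∀ x : ℤ, g x ≤ h x) (heq : ∀ x : ℤ, |x| ≤ T → h x = g x)
    (xt : V → ℤ) (A : Finset V)
    (hA : ∀ i ∈ A, ∀ j ∈ A, |xt i - xt j| ≤ T)
    (Eg Eght : (V → ℤ) → ℝ)
    (hEg : ∀ x : V → ℤ,
      Eg x = (∑ i, Eu i (x i)) + ∑ e ∈ Edges, g (x e.1 - x e.2))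
    (hEght : ∀ x : V → ℤ,
      Eght x = (∑ i, Eu i (x i)) + ∑ e ∈ Edges,
        (if e.1 ∈ A ∧ e.2 ∈ A then h (x e.1 - x e.2) else g (x e.1 - x e.2)))
    (φ : (V → ℤ) → (V → ℤ))
    (hφ : ∀ (u : V → ℤ) (i : V), φ u i = if i ∈ A then u i else xt i)
    (ustar : V → ℤ) (hmin : ∀ u : V → ℤ, Eght (φ ustar) ≤ Eght (φ u))
    (hstrict : Eght (φ ustar) < Eght xt)
    (xt1 : V → ℤ) (hxt1 : xt1 = φ ustar) :
    Eg xt1 < Eg xt := by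
  have h1 : Eg xt1 ≤ Eght xt1 := by
    rw [hEg, hEght]
    gcongr with e he
    split
    · exact hge _
    · exact le_rfl
  have h2 : Eght xt = Eg xt := by
    rw [hEg, hEght]
    congr 1
    apply Finset.sum_congr rfl
    intro e he
    split_ifs with hc
    · exact heq _ (hA _ hc.1 _ hc.2)
    · rfl
  calc Eg xt1 ≤ Eght xt1 := h1
    _ < Eght xt := by rw [hxt1]; exact hstrict
    _ = Eg xt := h2
end

section
/- (Submodularity of a convex pairwise term) Let h : ℝ → ℝ be a convex function. Then for all integers a, b, c, d: h((max a c) − (max b d)) + h((min a c) − (min b d)) ≤ h(a − b) + h(c − d). -/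
/-!
Put `x = a - b`, `y = c - d` and `p = max a c - max b d`. Then `p` lies between `x` and `y`,
and since `min + max` is the sum, `min a c - min b d = x + y - p`. Writing `p` and `x + y - p`
as the two mirror-image convex combinations of `x` and `y` and adding the two convexity
inequalities gives the claim.
-/

section

variable {𝕜 E β : Type*} [CommRing 𝕜] [PartialOrder 𝕜] [AddCommGroup E] [Module 𝕜 E]
  [AddCommMonoid β] [PartialOrder β] [IsOrderedAddMonoid β] [Module 𝕜 β] {s : Set E} {f : E → β}

theorem ConvexOn.map_add_map_add_sub_le (hf : ConvexOn 𝕜 s f) {x y p : E} (hx : x ∈ s)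
    (hy : y ∈ s) (hp : p ∈ segment 𝕜 x y) : f p + f (x + y - p) ≤ f x + f y := by
  obtain ⟨a, b, ha, hb, hab, rfl⟩ := hp
  obtain rfl : b = 1 - a := eq_sub_of_add_eq' hab
  have hreflect : x + y - (a • x + (1 - a) • y) = (1 - a) • x + a • y := by module
  rw [hreflect]
  calc f (a • x + (1 - a) • y) + f ((1 - a) • x + a • y)
      ≤ (a • f x + (1 - a) • f y) + ((1 - a) • f x + a • f y) :=
        add_le_add (hf.2 hx hy ha hb hab) (hf.2 hx hy hb ha (by rw [add_comm, hab]))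
    _ = f x + f y := by module

end

theorem max_sub_max_mem_uIcc {α : Type*} [AddCommGroup α] [LinearOrder α] [IsOrderedAddMonoid α]
    (a b c d : α) : max a c - max b d ∈ Set.uIcc (a - b) (c - d) := by
  rcases le_total a c with hac | hac <;> rcases le_total b d with hbd | hbd
  · rw [max_eq_right hac, max_eq_right hbd]
    exact Set.right_mem_uIcc
  · rw [max_eq_right hac, max_eq_left hbd]
    exact Set.mem_uIcc.2 (.inl ⟨sub_le_sub_right hac b, sub_le_sub_left hbd c⟩)
  · rw [max_eq_left hac, max_eq_right hbd]
    exact Set.mem_uIcc.2 (.inr ⟨sub_le_sub_right hac d, sub_le_sub_left hbd a⟩)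
  · rw [max_eq_left hac, max_eq_left hbd]
    exact Set.left_mem_uIcc

theorem ConvexOn.map_max_sub_max_add_map_min_sub_min_le {𝕜 β : Type*} [Field 𝕜] [LinearOrder 𝕜]
    [IsStrictOrderedRing 𝕜] [AddCommMonoid β] [PartialOrder β] [IsOrderedAddMonoid β]
    [Module 𝕜 β] {s : Set 𝕜} {h : 𝕜 → β} (hh : ConvexOn 𝕜 s h) {a b c d : 𝕜}
    (hab : a - b ∈ s) (hcd : c - d ∈ s) :
    h (max a c - max b d) + h (min a c - min b d) ≤ h (a - b) + h (c - d) := by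
  have hmin : min a c - min b d = (a - b) + (c - d) - (max a c - max b d) := by
    linarith [min_add_max a c, min_add_max b d]
  rw [hmin]
  refine hh.map_add_map_add_sub_le hab hcd ?_
  rw [segment_eq_uIcc]
  exact max_sub_max_mem_uIcc a b c d

/-- Submodularity of a convex pairwise term: for a convex `h : ℝ → ℝ` and integer labels,
`h(x_i - x_j)` satisfies the submodularity inequality with respect to max/min of labels. -/
theorem convex_pairwise_submodular (h : ℝ → ℝ) (hconv : ConvexOn ℝ Set.univ h)
    (a b c d : ℤ) :
    h (((max a c : ℤ) : ℝ) - ((max b d : ℤ) : ℝ)) +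
        h (((min a c : ℤ) : ℝ) - ((min b d : ℤ) : ℝ)) ≤
      h ((a : ℝ) - (b : ℝ)) + h ((c : ℝ) - (d : ℝ)) := by
  push_cast
  exact hconv.map_max_sub_max_add_map_min_sub_min_le trivial trivial
end

section
/- (Submodularity of a discretely convex prior on a short label range) Let T be a positive integer and g : ℤ → ℝ satisfy the discrete convexity condition 2·g(k) ≤ g(k−1) + g(k+1) for every integer k with |k| < T. Let α ≤ β be integers with β − α ≤ T. Then for all integers a, b, c, d in [α, β]: g((max a c) − (max b d)) + g((min a c) − (min b d)) ≤ g(a − b) + g(c − d). -/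
/-- One-step exchange: for `p ≤ q` both in the convexity range,
`g p + g q ≤ g (p-1) + g (q+1)`. -/
lemma discrete_convex_step (T : ℤ) (g : ℤ → ℝ)
    (hconv : ∀ k : ℤ, |k| < T → 2 * g k ≤ g (k - 1) + g (k + 1)) :
    ∀ n : ℕ, ∀ p q : ℤ, q = p + n → |p| < T → |q| < T →
      g p + g q ≤ g (p - 1) + g (q + 1) := by
  intro n
  induction n with
  | zero =>
    intro p q hq hp hq'
    subst hq
    have := hconv p hp
    simp only [Nat.cast_zero, add_zero] at *
    linarith
  | succ m ih =>
    intro p q hq hp hq'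
    have hq1 : q - 1 = p + m := by omega
    have hpq : p ≤ q - 1 := by omega
    have habs : |q - 1| < T := by
      rw [abs_lt] at *
      omega
    have h1 := ih p (q - 1) hq1 hp habs
    have h2 := hconv q hq'
    have : q - 1 + 1 = q := by ring
    rw [this] at h1
    linarith

/-- Multi-step key lemma: moving both endpoints inward by `n`. -/
lemma discrete_convex_key (T : ℤ) (g : ℤ → ℝ)
    (hconv : ∀ k : ℤ, |k| < T → 2 * g k ≤ g (k - 1) + g (k + 1)) :
    ∀ n : ℕ, ∀ x y : ℤ, -T ≤ x → y ≤ T → x + n ≤ y - n →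
      g (x + n) + g (y - n) ≤ g x + g y := by
  intro n
  induction n with
  | zero => intro x y _ _ _; simp
  | succ m ih =>
    intro x y hx hy hmid
    have hmid' : x + m ≤ y - m := by push_cast at *; omega
    have h1 := ih x y hx hy hmid'
    have hp : |x + (m + 1 : ℕ)| < T := by
      push_cast at *
      rw [abs_lt]
      omega
    have hq : |y - (m + 1 : ℕ)| < T := by
      push_cast at *
      rw [abs_lt]
      omega
    have heq : (y - (m + 1 : ℕ)) = (x + (m + 1 : ℕ)) + ((y - x).toNat - 2 * (m+1) : ℕ) := by
      push_cast at *
      omega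
    have h2 := discrete_convex_step T g hconv _ _ _ heq hp hq
    have e1 : (x + (m + 1 : ℕ)) - 1 = x + m := by push_cast; ring
    have e2 : (y - (m + 1 : ℕ)) + 1 = y - m := by push_cast; ring
    rw [e1, e2] at h2
    calc g (x + (m + 1 : ℕ)) + g (y - (m + 1 : ℕ)) ≤ g (x + m) + g (y - m) := h2
      _ ≤ g x + g y := by push_cast at *; linarith

/-- Exchange lemma in symmetric form. -/
lemma discrete_convex_exch (T : ℤ) (g : ℤ → ℝ)
    (hconv : ∀ k : ℤ, |k| < T → 2 * g k ≤ g (k - 1) + g (k + 1))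
    (x y P Q : ℤ) (h1 : -T ≤ x) (h2 : x ≤ T) (h3 : -T ≤ y) (h4 : y ≤ T)
    (hsum : P + Q = x + y) (hP1 : min x y ≤ P) (hP2 : P ≤ max x y) :
    g P + g Q ≤ g x + g y := by
  have main : ∀ u v p : ℤ, -T ≤ u → v ≤ T → u ≤ v → u ≤ p → 2 * p ≤ u + v →
      g p + g (u + v - p) ≤ g u + g v := by
    intro u v p hu hv huv hup hpmid
    have := discrete_convex_key T g hconv (p - u).toNat u v hu hv (by omega)
    have e1 : u + ((p - u).toNat : ℤ) = p := by omega
    have e2 : v - ((p - u).toNat : ℤ) = u + v - p := by omega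
    rwa [e1, e2] at this
  rcases le_total x y with h | h <;> rcases le_total P Q with h' | h'
  · have := main x y P h1 h4 h (by omega) (by omega)
    have e : x + y - P = Q := by omega
    rwa [e] at this
  · have := main x y Q h1 h4 h (by omega) (by omega)
    have e : x + y - Q = P := by omega
    rw [e] at this
    linarith
  · have := main y x P h3 h2 h (by omega) (by omega)
    have e : y + x - P = Q := by omega
    rw [e] at this
    linarith
  · have := main y x Q h3 h2 h (by omega) (by omega)
    have e : y + x - Q = P := by omega
    rw [e] at this
    linarith

/-- Submodularity of a discretely convex prior on a short label range: if `g` is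
discretely convex at every `k` with `|k| < T` and all four labels lie in `[α, β]` with
`β - α ≤ T`, then the submodularity inequality holds. -/
theorem discrete_convex_submodular_on_range (T : ℤ) (hT : 0 < T) (g : ℤ → ℝ)
    (hconv : ∀ k : ℤ, |k| < T → 2 * g k ≤ g (k - 1) + g (k + 1))
    (α β : ℤ) (hαβ : α ≤ β) (hrange : β - α ≤ T)
    (a b c d : ℤ) (ha : a ∈ Set.Icc α β) (hb : b ∈ Set.Icc α β)
    (hc : c ∈ Set.Icc α β) (hd : d ∈ Set.Icc α β) :
    g (max a c - max b d) + g (min a c - min b d) ≤ g (a - b) + g (c - d) := by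
  obtain ⟨ha1, ha2⟩ := ha
  obtain ⟨hb1, hb2⟩ := hb
  obtain ⟨hc1, hc2⟩ := hc
  obtain ⟨hd1, hd2⟩ := hd
  apply discrete_convex_exch T g hconv (a - b) (c - d) _ _
    (by omega) (by omega) (by omega) (by omega)
  · rcases le_total a c with h | h <;> rcases le_total b d with h' | h' <;>
      simp [max_eq_left, max_eq_right, min_eq_left, min_eq_right, h, h'] <;> omega
  · rcases le_total a c with h | h <;> rcases le_total b d with h' | h' <;>
      simp [max_eq_left, max_eq_right, min_eq_left, min_eq_right, h, h'] <;> omega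
  · rcases le_total a c with h | h <;> rcases le_total b d with h' | h' <;>
      simp [max_eq_left, max_eq_right, min_eq_left, min_eq_right, h, h'] <;> omega
end

section
/- (Extended range-move dominates the standard range-move, eq. (8)) Let V be a finite vertex set, Ẽ ⊆ V×V a finite edge set, E_i : ℤ → ℝ unary terms, T a positive integer, and g, h : ℤ → ℝ with h(x) ≥ g(x) for all x and h(x) = g(x) for |x| ≤ T. Let α ≤ β be integers with 0 < β − α ≤ T, let x^t : V → ℤ, let A = { i ∈ V : α ≤ x^t_i ≤ β }, and define φ_i(u) = u_i if i ∈ A and φ_i(u) = x^t_i otherwise. Let S ⊆ ℤ be a label set containing [α, β], and let Ẽ'(u) denote the energy with the unary terms of E^g, pairwise term h(u_i − u_j) on edges with both endpoints in A, and g-terms elsewhere, evaluated at φ(u). If ũ* minimizes u ↦ Ẽ'(φ(u)) over u : V → S and u* minimizes u ↦ E^g(φ(u)) over u : V → [α, β], then E^g(φ(ũ*)) ≤ E^g(φ(u*)). -/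
/-- The extended range-move dominates the standard range-move (eq. (8) of the paper):
if `ũ*` minimizes the surrogate energy `Ẽ'` over labellings into the larger label set `S`
and `u*` minimizes `E^g` over labellings into `[α, β]`, then
`E^g(φ(ũ*)) ≤ E^g(φ(u*))`. -/
theorem extended_range_move_dominates {V : Type*} [Fintype V] [DecidableEq V]
    (Edges : Finset (V × V)) (Eu : V → ℤ → ℝ) (T : ℤ) (hT : 0 < T)
    (g h : ℤ → ℝ) (hge : ∀ x : ℤ, g x ≤ h x) (heq : ∀ x : ℤ, |x| ≤ T → h x = g x)
    (α β : ℤ) (hαβ : α < β) (hrange : β - α ≤ T)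
    (xt : V → ℤ) (A : Finset V) (hAdef : ∀ i : V, i ∈ A ↔ α ≤ xt i ∧ xt i ≤ β)
    (φ : (V → ℤ) → (V → ℤ))
    (hφ : ∀ (u : V → ℤ) (i : V), φ u i = if i ∈ A then u i else xt i)
    (S : Set ℤ) (hS : Set.Icc α β ⊆ S)
    (Eg Etil : (V → ℤ) → ℝ)
    (hEg : ∀ x : V → ℤ,
      Eg x = (∑ i, Eu i (x i)) + ∑ e ∈ Edges, g (x e.1 - x e.2))
    (hEtil : ∀ x : V → ℤ,
      Etil x = (∑ i, Eu i (x i)) + ∑ e ∈ Edges,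
        (if e.1 ∈ A ∧ e.2 ∈ A then h (x e.1 - x e.2) else g (x e.1 - x e.2)))
    (utilstar : V → ℤ) (hutil : ∀ i, utilstar i ∈ S)
    (hmin1 : ∀ u : V → ℤ, (∀ i, u i ∈ S) → Etil (φ utilstar) ≤ Etil (φ u))
    (ustar : V → ℤ) (hust : ∀ i, ustar i ∈ Set.Icc α β)
    (hmin2 : ∀ u : V → ℤ, (∀ i, u i ∈ Set.Icc α β) → Eg (φ ustar) ≤ Eg (φ u)) :
    Eg (φ utilstar) ≤ Eg (φ ustar) := by
  have h1 : Eg (φ utilstar) ≤ Etil (φ utilstar) := by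
    rw [hEg, hEtil]
    gcongr with e _
    split
    · exact hge _
    · exact le_rfl
  have h2 : Etil (φ utilstar) ≤ Etil (φ ustar) := by
    apply hmin1
    intro i
    exact hS (hust i)
  have h3 : Etil (φ ustar) = Eg (φ ustar) := by
    rw [hEg, hEtil]
    congr 1
    apply Finset.sum_congr rfl
    intro e _
    split
    · next hmem =>
      apply heq
      have h1 := hust e.1
      have h2 := hust e.2
      simp only [Set.mem_Icc] at h1 h2
      rw [hφ, hφ, if_pos hmem.1, if_pos hmem.2]
      rw [abs_le]
      constructor <;> linarith
    · rfl
  linarith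
end

section
/- (Monotonicity of the full range-move algorithm for truncated convex priors) Let V be a finite vertex set, Ẽ ⊆ V×V a finite edge set, E_i : ℤ → ℝ unary terms, T a positive integer, and g, h : ℤ → ℝ with h(x) = g(x) for |x| ≤ T, h(x) ≥ g(x) for all x, and g(x) ≤ g(d) for all integers x and all integers d with |d| > T (g attains its maximum beyond the truncation). Let x^t : V → ℤ, call an edge (i,j) active if |x^t_i − x^t_j| ≤ T, and define F(u) = Σ_{i∈V} E_i(u_i) + Σ_{(i,j) active} h(u_i − u_j). If u* minimizes F over all u : V → ℤ and x^{t+1} = u*, then E^g(x^{t+1}) ≤ E^g(x^t). -/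
/-- Monotonicity of the full range-move algorithm for truncated convex priors: one
iteration (minimizing the surrogate energy `F` that keeps only the currently active
edges, with `h = g` on `[-T, T]`, `h ≥ g`, and `g` attaining its maximum beyond the
truncation) does not increase the true energy `E^g`. -/
theorem full_range_move_monotone {V : Type*} [Fintype V]
    (Edges : Finset (V × V)) (Eu : V → ℤ → ℝ) (T : ℤ) (hT : 0 < T)
    (g h : ℤ → ℝ)
    (heq : ∀ x : ℤ, |x| ≤ T → h x = g x)
    (hge : ∀ x : ℤ, g x ≤ h x)
    (hgmax : ∀ x d : ℤ, T < |d| → g x ≤ g d)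
    (xt : V → ℤ)
    (Eg F : (V → ℤ) → ℝ)
    (hEg : ∀ x : V → ℤ,
      Eg x = (∑ i, Eu i (x i)) + ∑ e ∈ Edges, g (x e.1 - x e.2))
    (hF : ∀ u : V → ℤ,
      F u = (∑ i, Eu i (u i)) +
        ∑ e ∈ Edges.filter (fun e => |xt e.1 - xt e.2| ≤ T), h (u e.1 - u e.2))
    (ustar : V → ℤ) (hmin : ∀ u : V → ℤ, F ustar ≤ F u)
    (xt1 : V → ℤ) (hxt1 : xt1 = ustar) :
    Eg xt1 ≤ Eg xt := by
  subst hxt1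
  set p : V × V → Prop := fun e => |xt e.1 - xt e.2| ≤ T with hp
  have hsplit : ∀ (f : V × V → ℝ),
      ∑ e ∈ Edges, f e =
        (∑ e ∈ Edges.filter p, f e) + ∑ e ∈ Edges.filter (fun e => ¬ p e), f e := by
    intro f
    exact (Finset.sum_filter_add_sum_filter_not Edges p f).symm
  have h1 : Eg xt1 ≤ F xt1 +
      ∑ e ∈ Edges.filter (fun e => ¬ p e), g (xt e.1 - xt e.2) := by
    rw [hEg, hF, hsplit (fun e => g (xt1 e.1 - xt1 e.2)), add_assoc]
    refine add_le_add le_rfl (add_le_add ?_ ?_)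
    · exact Finset.sum_le_sum fun e _ => hge _
    · refine Finset.sum_le_sum fun e he => ?_
      exact hgmax _ _ (lt_of_not_ge (Finset.mem_filter.mp he).2)
  have h2 : F xt1 ≤ (∑ i, Eu i (xt i)) +
      ∑ e ∈ Edges.filter p, g (xt e.1 - xt e.2) := by
    have := hmin xt
    rw [hF xt] at this
    refine this.trans (le_of_eq ?_)
    congr 1
    refine Finset.sum_congr rfl fun e he => ?_
    exact heq _ (Finset.mem_filter.mp he).2
  have h3 : Eg xt = (∑ i, Eu i (xt i)) +
      ((∑ e ∈ Edges.filter p, g (xt e.1 - xt e.2)) +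
       ∑ e ∈ Edges.filter (fun e => ¬ p e), g (xt e.1 - xt e.2)) := by
    rw [hEg, hsplit (fun e => g (xt e.1 - xt e.2))]
  calc Eg xt1 ≤ F xt1 + ∑ e ∈ Edges.filter (fun e => ¬ p e), g (xt e.1 - xt e.2) := h1
    _ ≤ ((∑ i, Eu i (xt i)) + ∑ e ∈ Edges.filter p, g (xt e.1 - xt e.2)) +
        ∑ e ∈ Edges.filter (fun e => ¬ p e), g (xt e.1 - xt e.2) := by gcongr
    _ = Eg xt := by rw [h3]; ring
end
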